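/- arXiv:2604.08041 — 4 statements merged into one kernel-verified Lean document; each statement's English description precedes it below -/
import Mathlib

section
/- Let 0 < β ≤ 1, T > 0, a ≥ 0, b ≥ 0, and let g_0, g_1, ..., g_n : [0,T] → ℝ be continuous functions satisfying g_i(t) ≤ a + b·(I^β g_{i-1})(t) for every i = 1, ..., n and all t ∈ [0,T]. Then for all t ∈ [0,T] one has g_n(t) ≤ a·∑_{i=0}^{n-1} b^i t^{iβ}/Γ(iβ+1) + b^n·(I^{nβ} g_0)(t). -/
open MeasureTheory

/-- The Riemann–Liouville fractional integral of order `β` of `g`: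
`(I^β g)(t) = (1/Γ(β)) ∫₀ᵗ (t-ξ)^{β-1} g(ξ) dξ`. -/
noncomputable def rlInt (β : ℝ) (g : ℝ → ℝ) (t : ℝ) : ℝ :=
  (1 / Real.Gamma β) * ∫ ξ in (0:ℝ)..t, (t - ξ) ^ (β - 1) * g ξ

/-!
Iterating the inequality `n` times only needs three properties of `I^γ`: it is monotone, it sends
the constant `1` to `t^γ / Γ(γ+1)`, and `I^γ ∘ I^β = I^(γ+β)`. The semigroup law comes from
Dirichlet's formula (Fubini on the triangle `0 < ξ ≤ s ≤ t`), after which the inner integral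
`∫_ξ^t (t-s)^(γ-1) (s-ξ)^(β-1) ds` is a rescaled Beta integral `(t-ξ)^(γ+β-1) B(β, γ)`.
-/

open Set

def triangle (t : ℝ) : Set (ℝ × ℝ) := {q | q.1 ∈ Ioc 0 t ∧ q.2 ∈ Ioc 0 q.1}

section Triangle

variable {M E : Type*} [Zero M] [NormedAddCommGroup E] [NormedSpace ℝ E] {t : ℝ}

lemma measurableSet_triangle (t : ℝ) : MeasurableSet (triangle t) :=
  (measurable_fst measurableSet_Ioc).inter
    ((measurableSet_lt measurable_const measurable_snd).inter
      (measurableSet_le measurable_snd measurable_fst))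

lemma indicator_triangle_eq_fst (f : ℝ × ℝ → M) (s ξ : ℝ) :
    (triangle t).indicator f (s, ξ) =
      (Ioc 0 t).indicator (fun s ↦ (Ioc 0 s).indicator (fun ξ ↦ f (s, ξ)) ξ) s := by
  simp only [indicator_apply, triangle, mem_ofPred_eq]
  split_ifs <;> tauto

lemma indicator_triangle_eq_snd (f : ℝ × ℝ → M) (s ξ : ℝ) :
    (triangle t).indicator f (s, ξ) =
      (Ioc 0 t).indicator (fun ξ ↦ (Icc ξ t).indicator (fun s ↦ f (s, ξ)) s) ξ := by
  simp only [indicator_apply, triangle, mem_ofPred_eq, mem_Ioc, mem_Icc]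
  split_ifs <;> first | rfl | (exfalso; grind)

lemma integral_indicator_triangle_fst (f : ℝ × ℝ → E) (s : ℝ) :
    ∫ ξ, (triangle t).indicator f (s, ξ) =
      (Ioc 0 t).indicator (fun s ↦ ∫ ξ in 0..s, f (s, ξ)) s := by
  by_cases hs : s ∈ Ioc 0 t
  · simp_rw [indicator_triangle_eq_fst, indicator_of_mem hs,
      integral_indicator measurableSet_Ioc, intervalIntegral.integral_of_le hs.1.le]
  · simp [indicator_triangle_eq_fst, hs]

lemma integral_indicator_triangle_snd (f : ℝ × ℝ → E) (ξ : ℝ) :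
    ∫ s, (triangle t).indicator f (s, ξ) =
      (Ioc 0 t).indicator (fun ξ ↦ ∫ s in ξ..t, f (s, ξ)) ξ := by
  by_cases hξ : ξ ∈ Ioc 0 t
  · simp_rw [indicator_triangle_eq_snd, indicator_of_mem hξ,
      integral_indicator measurableSet_Icc, integral_Icc_eq_integral_Ioc,
      intervalIntegral.integral_of_le hξ.2]
  · simp [indicator_triangle_eq_snd, hξ]

lemma IntegrableOn.intervalIntegrable_integral_triangle {f : ℝ × ℝ → E}
    (hf : IntegrableOn f (triangle t)) (ht : 0 ≤ t) :
    IntervalIntegrable (fun s ↦ ∫ ξ in 0..s, f (s, ξ)) volume 0 t := by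
  have h := ((integrable_indicator_iff (measurableSet_triangle t)).2 hf).integral_prod_left
  simp_rw [integral_indicator_triangle_fst, integrable_indicator_iff measurableSet_Ioc] at h
  exact (intervalIntegrable_iff_integrableOn_Ioc_of_le ht).2 h

lemma integral_integral_triangle_swap {f : ℝ × ℝ → E} (hf : IntegrableOn f (triangle t))
    (ht : 0 ≤ t) :
    ∫ s in 0..t, ∫ ξ in 0..s, f (s, ξ) = ∫ ξ in 0..t, ∫ s in ξ..t, f (s, ξ) := by
  have h := integral_integral_swap (f := fun s ξ ↦ (triangle t).indicator f (s, ξ))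
    ((integrable_indicator_iff (measurableSet_triangle t)).2 hf)
  simp_rw [integral_indicator_triangle_fst, integral_indicator_triangle_snd,
    integral_indicator measurableSet_Ioc] at h
  rwa [intervalIntegral.integral_of_le ht, intervalIntegral.integral_of_le ht]

end Triangle

section Kernel

variable {β γ t : ℝ}

lemma integral_rpow_mul_one_sub_rpow (hβ : 0 < β) (hγ : 0 < γ) :
    ∫ u in (0:ℝ)..1, u ^ (β - 1) * (1 - u) ^ (γ - 1) =
      Real.Gamma β * Real.Gamma γ / Real.Gamma (β + γ) := by
  have h := Complex.betaIntegral_eq_Gamma_mul_div β γ (by simpa) (by simpa)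
  have hint : Complex.betaIntegral β γ =
      ↑(∫ u in (0:ℝ)..1, u ^ (β - 1) * (1 - u) ^ (γ - 1)) := by
    rw [Complex.betaIntegral, ← intervalIntegral.integral_ofReal]
    refine intervalIntegral.integral_congr fun u hu ↦ ?_
    rw [uIcc_of_le zero_le_one] at hu
    push_cast
    rw [Complex.ofReal_cpow hu.1, Complex.ofReal_cpow (sub_nonneg.2 hu.2)]
    push_cast; rfl
  rw [hint, ← Complex.ofReal_add, Complex.Gamma_ofReal, Complex.Gamma_ofReal,
    Complex.Gamma_ofReal] at h
  exact_mod_cast h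

lemma integral_sub_rpow_mul_rpow_sub (hβ : 0 < β) (hγ : 0 < γ) {ξ : ℝ} (hξ : ξ < t) :
    ∫ s in ξ..t, (t - s) ^ (γ - 1) * (s - ξ) ^ (β - 1) =
      (t - ξ) ^ (γ + β - 1) * (Real.Gamma β * Real.Gamma γ / Real.Gamma (β + γ)) := by
  have hd : 0 < t - ξ := sub_pos.2 hξ
  have h := intervalIntegral.smul_integral_comp_mul_add (a := 0) (b := 1)
    (fun s ↦ (t - s) ^ (γ - 1) * (s - ξ) ^ (β - 1)) (t - ξ) ξ
  simp only [mul_zero, zero_add, mul_one, sub_add_cancel, smul_eq_mul] at h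
  rw [← h, ← integral_rpow_mul_one_sub_rpow hβ hγ, ← intervalIntegral.integral_const_mul,
    ← intervalIntegral.integral_const_mul]
  refine intervalIntegral.integral_congr fun u hu ↦ ?_
  rw [uIcc_of_le zero_le_one] at hu
  have h1 : t - ((t - ξ) * u + ξ) = (t - ξ) * (1 - u) := by ring
  have h2 : (t - ξ) * u + ξ - ξ = (t - ξ) * u := by ring
  rw [h1, h2, Real.mul_rpow hd.le (sub_nonneg.2 hu.2), Real.mul_rpow hd.le hu.1,
    show γ + β - 1 = (γ - 1) + (β - 1) + 1 by ring, Real.rpow_add hd, Real.rpow_add hd,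
    Real.rpow_one]
  field_simp

lemma intervalIntegrable_sub_rpow (hγ : 0 < γ) (t : ℝ) :
    IntervalIntegrable (fun ξ ↦ (t - ξ) ^ (γ - 1)) volume 0 t := by
  simpa using ((intervalIntegral.intervalIntegrable_rpow' (a := 0) (b := t)
    (by linarith : (-1:ℝ) < γ - 1)).comp_sub_left t).symm

lemma integral_sub_rpow (hγ : 0 < γ) :
    ∫ ξ in (0:ℝ)..t, (t - ξ) ^ (γ - 1) = t ^ γ / γ := by
  rw [intervalIntegral.integral_comp_sub_left (fun x ↦ x ^ (γ - 1)) t, sub_self, sub_zero,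
    integral_rpow (Or.inl (by linarith)), Real.zero_rpow (by linarith), sub_add_cancel, sub_zero]

lemma ContinuousOn.intervalIntegrable_sub_rpow_mul (hγ : 0 < γ) (ht : 0 ≤ t) {h : ℝ → ℝ}
    (hh : ContinuousOn h (Icc 0 t)) :
    IntervalIntegrable (fun ξ ↦ (t - ξ) ^ (γ - 1) * h ξ) volume 0 t :=
  (intervalIntegrable_sub_rpow hγ t).mul_continuousOn (by rwa [uIcc_of_le ht])

lemma integrableOn_triangle_sub_rpow_mul_rpow (hβ : 0 < β) (hγ : 0 < γ) (ht : 0 ≤ t) :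
    IntegrableOn (fun q : ℝ × ℝ ↦ (t - q.1) ^ (γ - 1) * (q.1 - q.2) ^ (β - 1)) (triangle t) := by
  set P : ℝ × ℝ → ℝ := fun q ↦ (t - q.1) ^ (γ - 1) * (q.1 - q.2) ^ (β - 1)
  have hP : Measurable P := by fun_prop
  have hslice : ∀ s ∈ Ioc 0 t, ∫ ξ in (0:ℝ)..s, ‖P (s, ξ)‖ = (t - s) ^ (γ - 1) * (s ^ β / β) := by
    intro s hs
    rw [← integral_sub_rpow hβ, ← intervalIntegral.integral_const_mul]
    refine intervalIntegral.integral_congr fun ξ hξ ↦ ?_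
    rw [uIcc_of_le hs.1.le] at hξ
    exact Real.norm_of_nonneg (mul_nonneg (Real.rpow_nonneg (by linarith [hs.2]) _)
      (Real.rpow_nonneg (by linarith [hξ.2]) _))
  rw [← integrable_indicator_iff (measurableSet_triangle t)]
  refine (integrable_prod_iff
    (hP.indicator (measurableSet_triangle t)).aestronglyMeasurable).2 ⟨?_, ?_⟩
  · refine Filter.Eventually.of_forall fun s ↦ ?_
    simp_rw [indicator_triangle_eq_fst]
    by_cases hs : s ∈ Ioc 0 t
    · simp only [indicator_of_mem hs]
      rw [integrable_indicator_iff measurableSet_Ioc,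
        ← intervalIntegrable_iff_integrableOn_Ioc_of_le hs.1.le]
      exact (intervalIntegrable_sub_rpow hβ s).const_mul ((t - s) ^ (γ - 1))
    · simp [hs]
  · simp_rw [norm_indicator_eq_indicator_norm, integral_indicator_triangle_fst]
    rw [integrable_indicator_iff measurableSet_Ioc]
    refine IntegrableOn.congr_fun ?_ (fun s hs ↦ (hslice s hs).symm) measurableSet_Ioc
    rw [← intervalIntegrable_iff_integrableOn_Ioc_of_le ht]
    exact (intervalIntegrable_sub_rpow hγ t).mul_continuousOn
      ((Real.continuous_rpow_const hβ.le).div_const β).continuousOn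

lemma ContinuousOn.integrableOn_triangle (hβ : 0 < β) (hγ : 0 < γ) (ht : 0 ≤ t) {h : ℝ → ℝ}
    (hh : ContinuousOn h (Icc 0 t)) :
    IntegrableOn (fun q : ℝ × ℝ ↦ (t - q.1) ^ (γ - 1) * (q.1 - q.2) ^ (β - 1) * h q.2)
      (triangle t) := by
  obtain ⟨M, hM⟩ := isCompact_Icc.exists_bound_of_continuousOn hh
  have hmaps : MapsTo Prod.snd (triangle t) (Icc 0 t) :=
    fun q hq ↦ ⟨hq.2.1.le, hq.2.2.trans hq.1.2⟩
  refine ((integrableOn_triangle_sub_rpow_mul_rpow hβ hγ ht).mul_const M).mono' ?_ ?_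
  · exact (Measurable.aestronglyMeasurable (by fun_prop)).mul
      ((hh.comp continuous_snd.continuousOn hmaps).aestronglyMeasurable
        (measurableSet_triangle t))
  · filter_upwards [ae_restrict_mem (measurableSet_triangle t)] with q hq
    have hP : 0 ≤ (t - q.1) ^ (γ - 1) * (q.1 - q.2) ^ (β - 1) :=
      mul_nonneg (Real.rpow_nonneg (by linarith [hq.1.2]) _)
        (Real.rpow_nonneg (by linarith [hq.2.2]) _)
    rw [norm_mul, Real.norm_of_nonneg hP]
    exact mul_le_mul_of_nonneg_left (hM _ (hmaps hq)) hP

end Kernel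

section RiemannLiouville

variable {β γ t : ℝ}

lemma rlInt_const_add_mul (hγ : 0 < γ) (a b : ℝ) {w : ℝ → ℝ}
    (hw : IntervalIntegrable (fun ξ ↦ (t - ξ) ^ (γ - 1) * w ξ) volume 0 t) :
    rlInt γ (fun s ↦ a + b * w s) t = a * t ^ γ / Real.Gamma (γ + 1) + b * rlInt γ w t := by
  have hΓ : Real.Gamma γ ≠ 0 := (Real.Gamma_pos_of_pos hγ).ne'
  have hsplit : ∀ ξ, (t - ξ) ^ (γ - 1) * (a + b * w ξ) =
      (t - ξ) ^ (γ - 1) * a + b * ((t - ξ) ^ (γ - 1) * w ξ) := fun ξ ↦ by ring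
  simp_rw [rlInt, hsplit]
  rw [intervalIntegral.integral_add ((intervalIntegrable_sub_rpow hγ t).mul_const a)
      (hw.const_mul b), intervalIntegral.integral_mul_const, intervalIntegral.integral_const_mul,
    integral_sub_rpow hγ, Real.Gamma_add_one hγ.ne']
  field_simp

lemma rlInt_mono (hγ : 0 < γ) (ht : 0 ≤ t) {f h : ℝ → ℝ}
    (hf : IntervalIntegrable (fun ξ ↦ (t - ξ) ^ (γ - 1) * f ξ) volume 0 t)
    (hh : IntervalIntegrable (fun ξ ↦ (t - ξ) ^ (γ - 1) * h ξ) volume 0 t)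
    (hle : ∀ ξ ∈ Icc 0 t, f ξ ≤ h ξ) :
    rlInt γ f t ≤ rlInt γ h t := by
  refine mul_le_mul_of_nonneg_left ?_ (one_div_nonneg.2 (Real.Gamma_pos_of_pos hγ).le)
  refine intervalIntegral.integral_mono_on ht hf hh fun ξ hξ ↦ ?_
  exact mul_le_mul_of_nonneg_left (hle ξ hξ) (Real.rpow_nonneg (by linarith [hξ.2]) _)

lemma sub_rpow_mul_rlInt (h : ℝ → ℝ) (s : ℝ) :
    (t - s) ^ (γ - 1) * rlInt β h s =
      1 / Real.Gamma β * ∫ ξ in (0:ℝ)..s, (t - s) ^ (γ - 1) * (s - ξ) ^ (β - 1) * h ξ := by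
  simp_rw [rlInt, mul_assoc, ← intervalIntegral.integral_const_mul]
  ring_nf

lemma ContinuousOn.intervalIntegrable_sub_rpow_mul_rlInt (hβ : 0 < β) (hγ : 0 < γ)
    (ht : 0 ≤ t) {h : ℝ → ℝ} (hh : ContinuousOn h (Icc 0 t)) :
    IntervalIntegrable (fun s ↦ (t - s) ^ (γ - 1) * rlInt β h s) volume 0 t := by
  simp_rw [sub_rpow_mul_rlInt]
  exact (IntegrableOn.intervalIntegrable_integral_triangle
    (hh.integrableOn_triangle hβ hγ ht) ht).const_mul _

theorem rlInt_rlInt (hβ : 0 < β) (hγ : 0 < γ) (ht : 0 ≤ t) {h : ℝ → ℝ}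
    (hh : ContinuousOn h (Icc 0 t)) :
    rlInt γ (rlInt β h) t = rlInt (γ + β) h t := by
  have hΓβ := (Real.Gamma_pos_of_pos hβ).ne'
  have hΓγ := (Real.Gamma_pos_of_pos hγ).ne'
  have hΓ := (Real.Gamma_pos_of_pos (add_pos hγ hβ)).ne'
  -- at `ξ = t` the inner integral vanishes while `(t - ξ) ^ (γ + β - 1)` need not
  have hinner : EqOn
      (fun ξ ↦ ∫ s in ξ..t, (t - s) ^ (γ - 1) * (s - ξ) ^ (β - 1) * h ξ)
      (fun ξ ↦ Real.Gamma β * Real.Gamma γ / Real.Gamma (γ + β) *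
        ((t - ξ) ^ (γ + β - 1) * h ξ)) (Ioo 0 t) := fun ξ hξ ↦ by
    dsimp only
    rw [intervalIntegral.integral_mul_const, integral_sub_rpow_mul_rpow_sub hβ hγ hξ.2,
      add_comm β γ]
    ring
  rw [rlInt, rlInt]
  simp_rw [sub_rpow_mul_rlInt, intervalIntegral.integral_const_mul]
  rw [integral_integral_triangle_swap (hh.integrableOn_triangle hβ hγ ht) ht,
    intervalIntegral.integral_congr_Ioo_of_le ht hinner, intervalIntegral.integral_const_mul]
  field_simp

lemma rlInt_le_of_le_const_add_mul_rlInt (hβ : 0 < β) (hγ : 0 < γ) (ht : 0 ≤ t) {a b : ℝ}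
    {f h : ℝ → ℝ} (hf : ContinuousOn f (Icc 0 t)) (hh : ContinuousOn h (Icc 0 t))
    (hle : ∀ s ∈ Icc 0 t, f s ≤ a + b * rlInt β h s) :
    rlInt γ f t ≤ a * t ^ γ / Real.Gamma (γ + 1) + b * rlInt (γ + β) h t := by
  have hw := hh.intervalIntegrable_sub_rpow_mul_rlInt hβ hγ ht
  have hsplit : IntervalIntegrable (fun s ↦ (t - s) ^ (γ - 1) * (a + b * rlInt β h s))
      volume 0 t := by
    simp_rw [mul_add, mul_left_comm _ b]
    exact ((intervalIntegrable_sub_rpow hγ t).mul_const a).add (hw.const_mul b)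
  calc rlInt γ f t ≤ rlInt γ (fun s ↦ a + b * rlInt β h s) t :=
        rlInt_mono hγ ht (hf.intervalIntegrable_sub_rpow_mul hγ ht) hsplit hle
    _ = _ := by rw [rlInt_const_add_mul hγ a b hw, rlInt_rlInt hβ hγ ht hh]

theorem le_sum_add_rlInt_of_le_const_add_mul_rlInt (hβ : 0 < β) (ht : 0 ≤ t) {a b : ℝ}
    (hb : 0 ≤ b) {n : ℕ} (hn : 1 ≤ n) {g : ℕ → ℝ → ℝ}
    (hcont : ∀ i ≤ n, ContinuousOn (g i) (Icc 0 t))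
    (hrec : ∀ i, 1 ≤ i → i ≤ n → ∀ s ∈ Icc 0 t, g i s ≤ a + b * rlInt β (g (i - 1)) s) :
    g n t ≤ a * ∑ i ∈ Finset.range n,
          b ^ i * t ^ ((i : ℝ) * β) / Real.Gamma ((i : ℝ) * β + 1)
        + b ^ n * rlInt ((n : ℝ) * β) (g 0) t := by
  induction n, hn using Nat.le_induction generalizing g with
  | base => simpa using hrec 1 le_rfl le_rfl t ⟨ht, le_rfl⟩
  | succ n hn ih =>
    have hshift := ih (g := fun i ↦ g (i + 1)) (fun i hi ↦ hcont (i + 1) (by omega))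
      fun i hi1 hin s hs ↦ by
        simpa [Nat.sub_add_cancel hi1] using hrec (i + 1) (by omega) (by omega) s hs
    have hstep := rlInt_le_of_le_const_add_mul_rlInt hβ (γ := n * β) (by positivity) ht
      (hcont 1 (by omega)) (hcont 0 (by omega)) (hrec 1 le_rfl (by omega))
    calc g (n + 1) t
        ≤ a * ∑ i ∈ Finset.range n, b ^ i * t ^ ((i : ℝ) * β) / Real.Gamma ((i : ℝ) * β + 1)
          + b ^ n * rlInt (n * β) (g 1) t := hshift
      _ ≤ a * ∑ i ∈ Finset.range n, b ^ i * t ^ ((i : ℝ) * β) / Real.Gamma ((i : ℝ) * β + 1)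
          + b ^ n * (a * t ^ ((n : ℝ) * β) / Real.Gamma (n * β + 1)
            + b * rlInt (n * β + β) (g 0) t) :=
        add_le_add_right (mul_le_mul_of_nonneg_left hstep (pow_nonneg hb n)) _
      _ = _ := by
        rw [Finset.sum_range_succ, Nat.cast_succ, add_one_mul]
        ring

end RiemannLiouville

theorem stmt0_general (β T a b : ℝ) (hβ0 : 0 < β)
    (hb : 0 ≤ b) (n : ℕ) (hn : 1 ≤ n) (g : ℕ → ℝ → ℝ)
    (hcont : ∀ i ≤ n, ContinuousOn (g i) (Set.Icc 0 T))
    (hrec : ∀ i, 1 ≤ i → i ≤ n → ∀ t ∈ Set.Icc (0:ℝ) T,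
      g i t ≤ a + b * rlInt β (g (i - 1)) t) :
    ∀ t ∈ Set.Icc (0:ℝ) T,
      g n t ≤ a * ∑ i ∈ Finset.range n,
          b ^ i * t ^ ((i : ℝ) * β) / Real.Gamma ((i : ℝ) * β + 1)
        + b ^ n * rlInt ((n : ℝ) * β) (g 0) t := by
  intro t ht
  have hsub : Icc 0 t ⊆ Icc 0 T := Icc_subset_Icc_right ht.2
  exact le_sum_add_rlInt_of_le_const_add_mul_rlInt hβ0 ht.1 hb hn
    (fun i hi ↦ (hcont i hi).mono hsub) fun i hi1 hin s hs ↦ hrec i hi1 hin s (hsub hs)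

theorem stmt0 (β T a b : ℝ) (hβ0 : 0 < β) (hβ1 : β ≤ 1) (hT : 0 < T)
    (ha : 0 ≤ a) (hb : 0 ≤ b) (n : ℕ) (hn : 1 ≤ n) (g : ℕ → ℝ → ℝ)
    (hcont : ∀ i ≤ n, ContinuousOn (g i) (Set.Icc 0 T))
    (hrec : ∀ i, 1 ≤ i → i ≤ n → ∀ t ∈ Set.Icc (0:ℝ) T,
      g i t ≤ a + b * rlInt β (g (i - 1)) t) :
    ∀ t ∈ Set.Icc (0:ℝ) T,
      g n t ≤ a * ∑ i ∈ Finset.range n,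
          b ^ i * t ^ ((i : ℝ) * β) / Real.Gamma ((i : ℝ) * β + 1)
        + b ^ n * rlInt ((n : ℝ) * β) (g 0) t :=
  stmt0_general β T a b hβ0 hb n hn g hcont hrec
end

section
/- For every function v in the Schwartz space S(ℝ) and all integers s ≥ 1 and m ≥ 0, sup_{x∈ℝ} |x^s v^{(m)}(x)|² ≤ 2s ∫_ℝ (1+x²)^s (v^{(m)}(x))² dx + ( ∫_ℝ (1+x²)^s (v^{(m)}(x))² dx · ∫_ℝ (1+x²)^s (v^{(m+1)}(x))² dx )^{1/2}. -/
/-!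
Put `u = v⁽ᵐ⁾` and `w(x) = xˢ u(x)`. Both `w²` and its derivative `2 w w'` are integrable, so `w²`
vanishes at `±∞`, and writing `w(x)²` both as `∫_{-∞}^x (w²)'` and as `-∫_x^∞ (w²)'` gives
`w(x)² ≤ ∫ |w w'|`. Now `w w' = s x^{2s-1} u² + x^{2s} u u'` with `|x|^{2s-1}, x^{2s} ≤ (1 + x²)ˢ`,
so Cauchy–Schwarz for the weight `(1 + x²)ˢ` bounds `w(x)²` by `s I + √(I J)`, where `I` and `J`
are the weighted integrals of `u²` and `u'²`.
-/

open MeasureTheory Real Set Filter Topology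
open scoped SchwartzMap

theorem abs_pow_le_one_add_sq_pow (x : ℝ) {n k : ℕ} (h : n ≤ 2 * k) :
    |x| ^ n ≤ (1 + x ^ 2) ^ k := by
  have hmax : (max 1 |x|) ^ 2 ≤ 1 + x ^ 2 := by
    rcases le_total 1 |x| with hx | hx
    · rw [max_eq_right hx, sq_abs]; linarith
    · rw [max_eq_left hx]; nlinarith [sq_nonneg x]
  calc |x| ^ n ≤ (max 1 |x|) ^ n := pow_le_pow_left₀ (abs_nonneg x) (le_max_right _ _) n
    _ ≤ (max 1 |x|) ^ (2 * k) := pow_le_pow_right₀ (le_max_left _ _) h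
    _ = ((max 1 |x|) ^ 2) ^ k := pow_mul _ _ _
    _ ≤ (1 + x ^ 2) ^ k := pow_le_pow_left₀ (by positivity) hmax k

-- The left side is `|w w'|` for `w = xˢ a` with `a' = b`.
theorem abs_pow_mul_mul_deriv_le (x a b : ℝ) (s : ℕ) :
    |x ^ s * a * (s * x ^ (s - 1) * a + x ^ s * b)|
      ≤ s * ((1 + x ^ 2) ^ s * a ^ 2) + (1 + x ^ 2) ^ s * |a * b| := by
  have hodd := abs_pow_le_one_add_sq_pow x (n := s + (s - 1)) (k := s) (by omega)
  have heven := abs_pow_le_one_add_sq_pow x (n := s + s) (k := s) (by omega)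
  have hsplit : x ^ s * a * (s * x ^ (s - 1) * a + x ^ s * b)
      = s * (x ^ (s + (s - 1)) * a ^ 2) + x ^ (s + s) * (a * b) := by ring
  calc _ ≤ |s * (x ^ (s + (s - 1)) * a ^ 2)| + |x ^ (s + s) * (a * b)| :=
        hsplit ▸ abs_add_le _ _
    _ = s * (|x| ^ (s + (s - 1)) * a ^ 2) + |x| ^ (s + s) * |a * b| := by
        simp only [abs_mul, abs_pow, Nat.abs_cast, sq_abs]
    _ ≤ s * ((1 + x ^ 2) ^ s * a ^ 2) + (1 + x ^ 2) ^ s * |a * b| := by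
        gcongr

theorem integral_abs_mul_le_sqrt_mul {α : Type*} [MeasurableSpace α] {μ : Measure α}
    {f g : α → ℝ} (hf : MemLp f 2 μ) (hg : MemLp g 2 μ) :
    ∫ a, |f a * g a| ∂μ ≤ √((∫ a, f a ^ 2 ∂μ) * ∫ a, g a ^ 2 ∂μ) := by
  have hHolder := integral_mul_le_Lp_mul_Lq_of_nonneg Real.HolderConjugate.two_two
    (ae_of_all μ fun a => abs_nonneg (f a)) (ae_of_all μ fun a => abs_nonneg (g a))
    (by simpa using hf.norm) (by simpa using hg.norm)
  simp only [← abs_mul, Real.rpow_two, sq_abs, ← Real.sqrt_eq_rpow] at hHolder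
  rwa [Real.sqrt_mul (integral_nonneg fun a => sq_nonneg (f a))]

theorem two_mul_norm_le_integral_norm_deriv {E : Type*} [NormedAddCommGroup E]
    [NormedSpace ℝ E] [CompleteSpace E] {f f' : ℝ → E} (hderiv : ∀ x, HasDerivAt f (f' x) x)
    (hf : Integrable f) (hf' : Integrable f') (x : ℝ) :
    2 * ‖f x‖ ≤ ∫ y, ‖f' y‖ := by
  have hbot : Tendsto f atBot (𝓝 0) :=
    tendsto_zero_of_hasDerivAt_of_integrableOn_Iic (a := x) (fun y _ => hderiv y)
      hf'.integrableOn hf.integrableOn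
  have htop : Tendsto f atTop (𝓝 0) :=
    tendsto_zero_of_hasDerivAt_of_integrableOn_Ioi (a := x) (fun y _ => hderiv y)
      hf'.integrableOn hf.integrableOn
  have hIic : ∫ y in Iic x, f' y = f x := by
    simpa using integral_Iic_of_hasDerivAt_of_tendsto' (fun y _ => hderiv y) hf'.integrableOn hbot
  have hIoi : ∫ y in Ioi x, f' y = -f x := by
    simpa using integral_Ioi_of_hasDerivAt_of_tendsto' (fun y _ => hderiv y) hf'.integrableOn htop
  calc 2 * ‖f x‖ = ‖∫ y in Iic x, f' y‖ + ‖∫ y in Ioi x, f' y‖ := by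
        rw [hIic, hIoi, norm_neg]; ring
    _ ≤ (∫ y in Iic x, ‖f' y‖) + ∫ y in Ioi x, ‖f' y‖ :=
        add_le_add (norm_integral_le_integral_norm _) (norm_integral_le_integral_norm _)
    _ = ∫ y, ‖f' y‖ := by
        rw [← compl_Iic, integral_add_compl measurableSet_Iic hf'.norm]

theorem sq_le_integral_abs_mul_deriv {w w' : ℝ → ℝ} (hderiv : ∀ x, HasDerivAt w (w' x) x)
    (hw : Integrable fun x => w x ^ 2) (hww' : Integrable fun x => w x * w' x) (x : ℝ) :
    w x ^ 2 ≤ ∫ y, |w y * w' y| := by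
  have h := two_mul_norm_le_integral_norm_deriv (f' := fun y => 2 * (w y * w' y))
    (fun y => by simpa [mul_assoc] using (hderiv y).fun_pow 2) hw (hww'.const_mul 2) x
  simp only [Real.norm_eq_abs, abs_mul, abs_two, abs_sq, integral_const_mul] at h
  simpa only [abs_mul] using le_of_mul_le_mul_left h two_pos

namespace SchwartzMap

theorem integrable_one_add_sq_pow_mul_mul (f g : 𝓢(ℝ, ℝ)) (k : ℕ) :
    Integrable fun x => (1 + x ^ 2) ^ k * (f x * g x) := by
  have hρg : (fun x : ℝ => (1 + x ^ 2) ^ k * g x).HasTemperateGrowth := by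
    fun_prop
  have := (smulLeftCLM ℝ (fun x : ℝ => (1 + x ^ 2) ^ k * g x) f).integrable (μ := volume)
  rw [smulLeftCLM_apply hρg] at this
  simpa only [smul_eq_mul, mul_comm, mul_left_comm, mul_assoc] using this

theorem integrable_one_add_sq_pow_mul_sq (f : 𝓢(ℝ, ℝ)) (k : ℕ) :
    Integrable fun x => (1 + x ^ 2) ^ k * f x ^ 2 :=
  (integrable_one_add_sq_pow_mul_mul f f k).congr (ae_of_all _ fun x => by ring)

theorem integrable_one_add_sq_pow_mul_abs_mul (f g : 𝓢(ℝ, ℝ)) (k : ℕ) :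
    Integrable fun x => (1 + x ^ 2) ^ k * |f x * g x| :=
  (integrable_one_add_sq_pow_mul_mul f g k).abs.congr (ae_of_all _ fun x => by
    dsimp only
    rw [abs_mul, abs_of_nonneg (by positivity)])

theorem integral_one_add_sq_pow_mul_abs_mul_le (f g : 𝓢(ℝ, ℝ)) (k : ℕ) :
    ∫ x, (1 + x ^ 2) ^ k * |f x * g x|
      ≤ √((∫ x, (1 + x ^ 2) ^ k * f x ^ 2) * ∫ x, (1 + x ^ 2) ^ k * g x ^ 2) := by
  have hweight : ∀ (h : 𝓢(ℝ, ℝ)) x, (√((1 + x ^ 2) ^ k) * h x) ^ 2 = (1 + x ^ 2) ^ k * h x ^ 2 :=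
    fun h x => by rw [mul_pow, Real.sq_sqrt (by positivity)]
  have hmemLp : ∀ h : 𝓢(ℝ, ℝ), MemLp (fun x => √((1 + x ^ 2) ^ k) * h x) 2 := fun h => by
    refine (memLp_two_iff_integrable_sq (by fun_prop)).2 ?_
    simpa only [hweight] using integrable_one_add_sq_pow_mul_sq h k
  have hprod : ∀ x, (1 + x ^ 2) ^ k * |f x * g x|
      = |√((1 + x ^ 2) ^ k) * f x * (√((1 + x ^ 2) ^ k) * g x)| := fun x => by
    rw [mul_mul_mul_comm, Real.mul_self_sqrt (by positivity), abs_mul ((1 + x ^ 2) ^ k),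
      abs_of_nonneg (by positivity : (0 : ℝ) ≤ (1 + x ^ 2) ^ k)]
  simpa only [hprod, hweight] using integral_abs_mul_le_sqrt_mul (hmemLp f) (hmemLp g)

theorem sq_pow_mul_le (u : 𝓢(ℝ, ℝ)) (s : ℕ) (x : ℝ) :
    (x ^ s * u x) ^ 2 ≤ s * (∫ y, (1 + y ^ 2) ^ s * u y ^ 2)
      + √((∫ y, (1 + y ^ 2) ^ s * u y ^ 2) * ∫ y, (1 + y ^ 2) ^ s * deriv u y ^ 2) := by
  set u' := derivCLM ℝ ℝ u
  have hI := integrable_one_add_sq_pow_mul_sq u s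
  have hK := integrable_one_add_sq_pow_mul_abs_mul u u' s
  have hbound : Integrable fun y =>
      s * ((1 + y ^ 2) ^ s * u y ^ 2) + (1 + y ^ 2) ^ s * |u y * u' y| :=
    (hI.const_mul s).add hK
  have hw2 : Integrable fun y => (y ^ s * u y) ^ 2 := by
    refine hI.mono' (by fun_prop) (ae_of_all _ fun y => ?_)
    rw [Real.norm_of_nonneg (sq_nonneg _), mul_pow, ← sq_abs (y ^ s), abs_pow, ← pow_mul,
      mul_two]
    exact mul_le_mul_of_nonneg_right (abs_pow_le_one_add_sq_pow y (by omega)) (sq_nonneg _)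
  have hww' : Integrable fun y => y ^ s * u y * (s * y ^ (s - 1) * u y + y ^ s * u' y) :=
    hbound.mono' (by fun_prop) (ae_of_all _ fun y => abs_pow_mul_mul_deriv_le y (u y) (u' y) s)
  calc (x ^ s * u x) ^ 2
      ≤ ∫ y, |y ^ s * u y * (s * y ^ (s - 1) * u y + y ^ s * u' y)| :=
        sq_le_integral_abs_mul_deriv
          (fun y => (hasDerivAt_pow s y).mul (u.hasDerivAt y)) hw2 hww' x
    _ ≤ ∫ y, s * ((1 + y ^ 2) ^ s * u y ^ 2) + (1 + y ^ 2) ^ s * |u y * u' y| :=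
        integral_mono hww'.abs hbound fun y => abs_pow_mul_mul_deriv_le y (u y) (u' y) s
    _ = s * (∫ y, (1 + y ^ 2) ^ s * u y ^ 2) + ∫ y, (1 + y ^ 2) ^ s * |u y * u' y| := by
        rw [integral_add (hI.const_mul s) hK, integral_const_mul]
    _ ≤ _ := by
        gcongr
        exact integral_one_add_sq_pow_mul_abs_mul_le u u' s

theorem exists_eq_iteratedDeriv (v : 𝓢(ℝ, ℝ)) (m : ℕ) : ∃ u : 𝓢(ℝ, ℝ), ⇑u = iteratedDeriv m v := by
  induction m with
  | zero => exact ⟨v, iteratedDeriv_zero.symm⟩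
  | succ m ih =>
    obtain ⟨u, hu⟩ := ih
    exact ⟨derivCLM ℝ ℝ u, by rw [iteratedDeriv_succ, ← hu]; rfl⟩

end SchwartzMap

theorem iSup_abs_sq_le {ι : Type*} [Nonempty ι] {g : ι → ℝ} {B : ℝ} (h : ∀ i, g i ^ 2 ≤ B) :
    (⨆ i, |g i|) ^ 2 ≤ B := by
  have hB : 0 ≤ B := (sq_nonneg _).trans (h (Classical.arbitrary ι))
  have hle : ⨆ i, |g i| ≤ √B := ciSup_le fun i => Real.abs_le_sqrt (h i)
  calc (⨆ i, |g i|) ^ 2 ≤ √B ^ 2 :=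
        pow_le_pow_left₀ (Real.iSup_nonneg fun i => abs_nonneg _) hle 2
    _ = B := Real.sq_sqrt hB

theorem stmt3_general (v : SchwartzMap ℝ ℝ) (s m : ℕ) :
    (⨆ x : ℝ, |x ^ s * iteratedDeriv m (v : ℝ → ℝ) x|) ^ 2
      ≤ 2 * (s : ℝ) * (∫ x : ℝ, (1 + x ^ 2) ^ s * (iteratedDeriv m (v : ℝ → ℝ) x) ^ 2)
        + Real.sqrt ((∫ x : ℝ, (1 + x ^ 2) ^ s * (iteratedDeriv m (v : ℝ → ℝ) x) ^ 2)
            * (∫ x : ℝ, (1 + x ^ 2) ^ s * (iteratedDeriv (m + 1) (v : ℝ → ℝ) x) ^ 2)) := by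
  obtain ⟨u, hu⟩ := SchwartzMap.exists_eq_iteratedDeriv v m
  have hu' : iteratedDeriv (m + 1) v = deriv u := by rw [iteratedDeriv_succ, hu]
  rw [← hu, hu']
  have hI : 0 ≤ (s : ℝ) * ∫ x, (1 + x ^ 2) ^ s * u x ^ 2 :=
    mul_nonneg s.cast_nonneg (integral_nonneg fun x => by positivity)
  refine iSup_abs_sq_le fun x => (u.sq_pow_mul_le s x).trans ?_
  gcongr ?_ + _
  linarith

theorem stmt3 (v : SchwartzMap ℝ ℝ) (s m : ℕ) (hs : 1 ≤ s) :
    (⨆ x : ℝ, |x ^ s * iteratedDeriv m (v : ℝ → ℝ) x|) ^ 2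
      ≤ 2 * (s : ℝ) * (∫ x : ℝ, (1 + x ^ 2) ^ s * (iteratedDeriv m (v : ℝ → ℝ) x) ^ 2)
        + Real.sqrt ((∫ x : ℝ, (1 + x ^ 2) ^ s * (iteratedDeriv m (v : ℝ → ℝ) x) ^ 2)
            * (∫ x : ℝ, (1 + x ^ 2) ^ s * (iteratedDeriv (m + 1) (v : ℝ → ℝ) x) ^ 2)) :=
  stmt3_general v s m
end

section
/- Let α > 0, let β be a real number, and let m ≥ 1 be an integer. Then for every real z > 0, the m-th derivative of the function z ↦ z^{β-1} E_{α,β}(z^α) equals z^{β-m-1} E_{α,β-m}(z^α). -/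
/-!
Each term of `t ^ (c - 1) * E_{α,c}(t ^ α) = ∑ₖ t ^ (α k + c - 1) / Γ(α k + c)` differentiates to
the corresponding term with `c` replaced by `c - 1`, because `p / Γ(p + 1) = 1 / Γ(p)` (also at the
poles of `Γ`). Since `Γ` outgrows every exponential, the differentiated series converges locally
uniformly on `(0, ∞)`, so one derivative lowers the parameter `β` by one; induct on `m`.
-/

/-- The two-parameter Mittag-Leffler function (real version)
`E_{α,β}(z) = ∑ₖ zᵏ / Γ(αk + β)`, with the convention that a summand vanishes at
the poles of `Γ` (Mathlib's `Real.Gamma` is `0` there, and division by `0` is `0`). -/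
noncomputable def mittagLefflerR (α β : ℝ) (z : ℝ) : ℝ :=
  ∑' k : ℕ, z ^ k / Real.Gamma (α * k + β)

open Filter Real Set

namespace Real

theorem div_Gamma_add_one (x : ℝ) : x / Gamma (x + 1) = (Gamma x)⁻¹ := by
  rcases eq_or_ne x 0 with rfl | hx
  · simp
  · rw [Gamma_add_one hx, div_mul_cancel_left₀ hx]

theorem eventually_rpow_le_Gamma {r : ℝ} (hr : 1 ≤ r) : ∀ᶠ y in atTop, r ^ y ≤ Gamma y := by
  have hfactorial : ∀ᶠ n : ℕ in atTop, r ^ (n + 2) ≤ (n.factorial : ℝ) := by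
    have h := (FloorSemiring.tendsto_pow_div_factorial_atTop r).const_mul (r ^ 2)
    rw [mul_zero] at h
    filter_upwards [h.eventually_lt_const one_pos] with n hn
    rw [mul_div_assoc', div_lt_one (by positivity)] at hn
    linarith [pow_add r n 2]
  have hfloor : Tendsto (fun y : ℝ => ⌊y - 1⌋₊) atTop atTop :=
    tendsto_nat_floor_atTop.comp (tendsto_atTop_add_const_right _ (-1) tendsto_id)
  filter_upwards [hfloor.eventually hfactorial, eventually_ge_atTop 2] with y hy hy2
  set n := ⌊y - 1⌋₊
  have hn_le_y : (n : ℝ) + 1 ≤ y := by linarith [Nat.floor_le (by linarith : (0 : ℝ) ≤ y - 1)]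
  have hy_le : y ≤ (n : ℝ) + 2 := by linarith [Nat.lt_floor_add_one (y - 1)]
  have hn_two : (2 : ℝ) ≤ n + 1 := by
    have : 1 ≤ n := Nat.le_floor (by push_cast; linarith)
    exact_mod_cast Nat.succ_le_succ this
  calc r ^ y ≤ r ^ ((n : ℝ) + 2) := rpow_le_rpow_of_exponent_le hr hy_le
    _ = r ^ (n + 2) := by exact_mod_cast rpow_natCast r (n + 2)
    _ ≤ n.factorial := hy
    _ = Gamma (n + 1) := (Gamma_nat_eq_factorial n).symm
    _ ≤ Gamma y := Gamma_strictMonoOn_Ici.monotoneOn hn_two (hn_two.trans hn_le_y) hn_le_y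

theorem rpow_le_rpow_add_rpow {a b t : ℝ} (ha : 0 < a) (hat : a ≤ t) (htb : t ≤ b) (p : ℝ) :
    t ^ p ≤ a ^ p + b ^ p := by
  rcases le_total 0 p with hp | hp
  · linarith [rpow_le_rpow (ha.le.trans hat) htb hp, rpow_pos_of_pos ha p]
  · linarith [rpow_le_rpow_of_nonpos ha hat hp, rpow_pos_of_pos (ha.trans_le (hat.trans htb)) p]

end Real

theorem summable_pow_div_Gamma_mul_add {α : ℝ} (hα : 0 < α) (c x : ℝ) :
    Summable fun k : ℕ => x ^ k / Gamma (α * k + c) := by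
  set s := |x| + 1
  set r := s ^ α⁻¹
  have hs : 0 < s := by positivity
  have hr : 1 ≤ r := one_le_rpow (by simp [s]) (inv_pos.2 hα).le
  have hrs : r ^ α = s := by rw [← rpow_mul hs.le, inv_mul_cancel₀ hα.ne', rpow_one]
  have hlin : Tendsto (fun k : ℕ => α * k + c) atTop atTop :=
    tendsto_atTop_add_const_right _ c (tendsto_natCast_atTop_atTop.const_mul_atTop hα)
  have hgeom : Summable fun k : ℕ => (r ^ c)⁻¹ * (|x| / s) ^ k :=
    (summable_geometric_of_lt_one (by positivity) ((div_lt_one hs).2 (by simp [s]))).mul_left _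
  refine hgeom.of_norm_bounded_eventually_nat ?_
  filter_upwards [hlin.eventually (eventually_rpow_le_Gamma hr)] with k hk
  have hexp : r ^ (α * k + c) = s ^ k * r ^ c := by
    rw [rpow_add (by positivity), rpow_mul (by positivity), hrs, rpow_natCast]
  have hGamma : 0 < Gamma (α * k + c) := (rpow_pos_of_pos (by positivity) _).trans_le hk
  calc ‖x ^ k / Gamma (α * k + c)‖ = |x| ^ k / Gamma (α * k + c) := by
        rw [norm_div, norm_pow, norm_of_nonneg hGamma.le, norm_eq_abs]
    _ ≤ |x| ^ k / (s ^ k * r ^ c) := by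
        gcongr
        exact hexp ▸ hk
    _ = (r ^ c)⁻¹ * (|x| / s) ^ k := by rw [div_pow, div_mul_eq_div_div, div_eq_inv_mul]

noncomputable def mittagLefflerTerm (α c : ℝ) (k : ℕ) (t : ℝ) : ℝ :=
  t ^ (α * k + c - 1) / Gamma (α * k + c)

section MittagLefflerTerm

variable {α : ℝ} (c : ℝ) (k : ℕ) {t : ℝ}

theorem mittagLefflerTerm_eq (ht : 0 < t) :
    mittagLefflerTerm α c k t = t ^ (c - 1) * ((t ^ α) ^ k / Gamma (α * k + c)) := by
  rw [mittagLefflerTerm, mul_div_assoc', ← rpow_natCast, ← rpow_mul ht.le, ← rpow_add ht]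
  ring_nf

theorem summable_mittagLefflerTerm (hα : 0 < α) (ht : 0 < t) :
    Summable fun k => mittagLefflerTerm α c k t := by
  simpa only [mittagLefflerTerm_eq c _ ht] using
    (summable_pow_div_Gamma_mul_add hα c (t ^ α)).mul_left (t ^ (c - 1))

theorem tsum_mittagLefflerTerm (ht : 0 < t) :
    ∑' k, mittagLefflerTerm α c k t = t ^ (c - 1) * mittagLefflerR α c (t ^ α) := by
  simp only [mittagLefflerTerm_eq c _ ht, tsum_mul_left, mittagLefflerR]

theorem hasDerivAt_mittagLefflerTerm (ht : 0 < t) :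
    HasDerivAt (mittagLefflerTerm α c k) (mittagLefflerTerm α (c - 1) k t) t := by
  set p := α * k + c - 1
  have hderiv := (hasDerivAt_rpow_const (p := p) (Or.inl ht.ne')).div_const (Gamma (p + 1))
  have hfun : mittagLefflerTerm α c k = fun u => u ^ p / Gamma (p + 1) := by
    ext u
    rw [mittagLefflerTerm, sub_add_cancel]
  have hval : mittagLefflerTerm α (c - 1) k t = p * t ^ (p - 1) / Gamma (p + 1) := by
    have hexp : α * k + (c - 1) = p := by simp only [p]; ring
    rw [mittagLefflerTerm, hexp, mul_div_right_comm, div_Gamma_add_one, div_eq_mul_inv, mul_comm]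
  rwa [hfun, hval]

theorem abs_mittagLefflerTerm_le {a b : ℝ} (ha : 0 < a) (hat : a ≤ t) (htb : t ≤ b) :
    |mittagLefflerTerm α c k t| ≤ |mittagLefflerTerm α c k a| + |mittagLefflerTerm α c k b| := by
  have hb : 0 < b := ha.trans_le (hat.trans htb)
  simp only [mittagLefflerTerm, abs_div, abs_of_pos (rpow_pos_of_pos (ha.trans_le hat) _),
    abs_of_pos (rpow_pos_of_pos ha _), abs_of_pos (rpow_pos_of_pos hb _), ← add_div]
  gcongr
  exact rpow_le_rpow_add_rpow ha hat htb _

end MittagLefflerTerm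

theorem hasDerivAt_rpow_mul_mittagLefflerR {α : ℝ} (hα : 0 < α) (c : ℝ) {z : ℝ} (hz : 0 < z) :
    HasDerivAt (fun t => t ^ (c - 1) * mittagLefflerR α c (t ^ α))
      (z ^ (c - 2) * mittagLefflerR α (c - 1) (z ^ α)) z := by
  have ha : 0 < z / 2 := by linarith
  have hz_mem : z ∈ Ioo (z / 2) (2 * z) := ⟨by linarith, by linarith⟩
  have hbound : Summable fun k =>
      |mittagLefflerTerm α (c - 1) k (z / 2)| + |mittagLefflerTerm α (c - 1) k (2 * z)| :=
    (summable_mittagLefflerTerm _ hα ha).abs.add (summable_mittagLefflerTerm _ hα (by linarith)).abs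
  have hseries := hasDerivAt_tsum_of_isPreconnected hbound isOpen_Ioo isPreconnected_Ioo
    (fun k t ht => hasDerivAt_mittagLefflerTerm c k (ha.trans ht.1))
    (fun k t ht => abs_mittagLefflerTerm_le _ k ha ht.1.le ht.2.le) hz_mem
    (summable_mittagLefflerTerm c hα hz) hz_mem
  rw [tsum_mittagLefflerTerm _ hz, sub_sub, one_add_one_eq_two] at hseries
  refine hseries.congr_of_eventuallyEq ?_
  filter_upwards [Ioi_mem_nhds hz] with t ht
  exact (tsum_mittagLefflerTerm c ht).symm

theorem stmt7_general (α β : ℝ) (hα : 0 < α) (m : ℕ) (z : ℝ) (hz : 0 < z) :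
    iteratedDeriv m (fun t : ℝ => t ^ (β - 1) * mittagLefflerR α β (t ^ α)) z
      = z ^ (β - (m : ℝ) - 1) * mittagLefflerR α (β - m) (z ^ α) := by
  induction m generalizing z with
  | zero => simp
  | succ n ih =>
    have hnear : iteratedDeriv n (fun t => t ^ (β - 1) * mittagLefflerR α β (t ^ α))
        =ᶠ[nhds z] fun t => t ^ (β - n - 1) * mittagLefflerR α (β - n) (t ^ α) := by
      filter_upwards [Ioi_mem_nhds hz] with t ht
      exact ih t ht
    rw [iteratedDeriv_succ, hnear.deriv_eq, (hasDerivAt_rpow_mul_mittagLefflerR hα _ hz).deriv]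
    push_cast
    ring_nf

theorem stmt7 (α β : ℝ) (hα : 0 < α) (m : ℕ) (hm : 1 ≤ m) (z : ℝ) (hz : 0 < z) :
    iteratedDeriv m (fun t : ℝ => t ^ (β - 1) * mittagLefflerR α β (t ^ α)) z
      = z ^ (β - (m : ℝ) - 1) * mittagLefflerR α (β - m) (z ^ α) :=
  stmt7_general α β hα m z hz
end

section
/- Let m, k, N be positive integers with 2mk ≤ N and let M > 0. Then for every ε > 0 there exists a constant M_ε > 0 (depending on m, k, M, N and ε) such that every function u in the Schwartz space S(ℝ) with ∫_ℝ (u^{(N)}(x))² dx ≤ M satisfies ∫_ℝ x^{2m} (u^{(k)}(x))² dx ≤ M_ε + ε·∫_ℝ x^{2m+2} u(x)² dx. -/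
/-!
Write `J(a, b) = ∫ x^(2a) (u^(b))²`, so that `J(0, N) ≤ M`, and `X = J(m+1, 0)`. Only two tools
are used: integration by parts, `∫ x^p f g' = -p ∫ x^(p-1) f g - ∫ x^p f' g`, and the weighted
Cauchy–Schwarz inequality `|∫ x^(a+b) f g| ≤ (∫ x^(2a) f²) / 4t + t ∫ x^(2b) g²`.

With `p = 0` they make `b ↦ J(0, b)` log-convex, so `J(0, b) ≤ J(0, 0) + M` for `b ≤ N` and
`J(0, 1)^N ≤ J(0, 0)^(N-1) M`. With `p = 1` they give the uncertainty inequality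
`J(0, 0) ≤ 4R² J(0, 1) + R^(-2(m+1)) X`, and the two together bound `J(0, 0)` by `C_ε + ε X`.

For `a ≥ 1`, moving the `d` derivatives of one factor of `J(a, d) = ∫ x^(2a) u^(d) u^(d)` onto
the other leaves terms `∫ x^(2a-α) u^(2d-α) u`; splitting off at most `x^(m+1)` from the
weight bounds them by `J(2a-α-(m+1), 2d-α) / t + t (J(0, 0) + X)`. The gap `m+1-a` at least
doubles in this step while the order `d` at most doubles, so the condition `2md ≤ N(m+1-a)` is
inherited until the weight is used up and only the terms `J(0, b)`, `b ≤ N`, remain.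
-/

open MeasureTheory SchwartzMap

noncomputable section

theorem abs_mul_le_div_add_mul (x y : ℝ) {t : ℝ} (ht : 0 < t) :
    |x * y| ≤ x ^ 2 / (4 * t) + t * y ^ 2 := by
  rw [div_add' _ _ _ (by positivity), le_div_iff₀ (by positivity), abs_mul, ← sq_abs x,
    ← sq_abs y]
  nlinarith [sq_nonneg (|x| - 2 * t * |y|)]

theorem sq_le_mul_of_forall_le_div_add_mul {Z A B : ℝ} (hZ : 0 ≤ Z) (hA : 0 ≤ A)
    (hB : 0 ≤ B) (h : ∀ t > 0, Z ≤ A / (4 * t) + t * B) : Z ^ 2 ≤ A * B := by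
  rcases hZ.eq_or_lt with rfl | hZ
  · simpa using mul_nonneg hA hB
  rcases hB.eq_or_lt with rfl | hB
  · have := h ((A + 1) / (4 * Z)) (by positivity)
    field_simp at this
    nlinarith
  · have := h (Z / (2 * B)) (by positivity)
    field_simp at this
    nlinarith

theorem pow_two_mul_le_add_div (x : ℝ) {R : ℝ} (hR : 0 < R) {a c : ℕ} (hac : a ≤ c) :
    x ^ (2 * a) ≤ R ^ (2 * a) + x ^ (2 * c) / R ^ (2 * (c - a)) := by
  simp only [pow_mul]
  have hx : 0 ≤ x ^ 2 := sq_nonneg x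
  rcases le_total (x ^ 2) (R ^ 2) with hxR | hRx
  · have : 0 ≤ (x ^ 2) ^ c / (R ^ 2) ^ (c - a) := by positivity
    linarith [pow_le_pow_left₀ hx hxR a]
  · have : (x ^ 2) ^ a ≤ (x ^ 2) ^ c / (R ^ 2) ^ (c - a) := by
      rw [le_div_iff₀ (by positivity), ← Nat.add_sub_cancel' hac, pow_add]
      exact mul_le_mul_of_nonneg_left
        (by simpa using pow_le_pow_left₀ (by positivity) hRx (c - a)) (by positivity)
    linarith [pow_nonneg (sq_nonneg R) a]

theorem le_pow_mul_add_of_le_mul_add {P Y X c M : ℝ} {n : ℕ} (hP : 0 ≤ P) (hX : 0 ≤ X)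
    (hc : 0 ≤ c) (hM : 0 ≤ M) (hPY : P ≤ c * Y + X) (hYP : Y ^ (n + 1) ≤ P ^ n * M) :
    P ≤ (2 * c) ^ (n + 1) * M + 2 * X := by
  rcases le_or_gt P (2 * X) with h | h
  · nlinarith [pow_nonneg (mul_nonneg zero_le_two hc) (n + 1)]
  have hPpos : 0 < P := by linarith
  have hP2 : P ^ (n + 1) ≤ (2 * c) ^ (n + 1) * Y ^ (n + 1) := by
    rw [← mul_pow]; exact pow_le_pow_left₀ hP (by linarith) _
  have : P ^ n * P ≤ P ^ n * ((2 * c) ^ (n + 1) * M) := by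
    rw [← pow_succ]
    calc P ^ (n + 1) ≤ (2 * c) ^ (n + 1) * (P ^ n * M) :=
          hP2.trans (mul_le_mul_of_nonneg_left hYP (by positivity))
      _ = P ^ n * ((2 * c) ^ (n + 1) * M) := by ring
  linarith [le_of_mul_le_mul_left this (pow_pos hPpos n)]

def LogConvexSeq (c : ℕ → ℝ) : Prop := ∀ j, c (j + 1) ^ 2 ≤ c j * c (j + 2)

namespace LogConvexSeq

variable {c : ℕ → ℝ}

theorem one_mul_le_zero_mul_succ (h : LogConvexSeq c) (hc : ∀ j, 0 ≤ c j) (j : ℕ) :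
    c 1 * c j ≤ c 0 * c (j + 1) := by
  induction j with
  | zero => rw [mul_comm]
  | succ j ih =>
    rcases (hc (j + 1)).eq_or_lt with h0 | hpos
    · rw [← h0, mul_zero]; exact mul_nonneg (hc 0) (hc _)
    refine le_of_mul_le_mul_right ?_ hpos
    calc c 1 * c (j + 1) * c (j + 1) ≤ c 1 * (c j * c (j + 2)) := by
          rw [mul_assoc, ← sq]; exact mul_le_mul_of_nonneg_left (h j) (hc 1)
      _ = c 1 * c j * c (j + 2) := by ring
      _ ≤ c 0 * c (j + 1) * c (j + 2) := mul_le_mul_of_nonneg_right ih (hc _)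
      _ = c 0 * c (j + 1 + 1) * c (j + 1) := by ring

theorem one_pow_succ_le (h : LogConvexSeq c) (hc : ∀ j, 0 ≤ c j) (n : ℕ) :
    c 1 ^ (n + 1) ≤ c 0 ^ n * c (n + 1) := by
  induction n with
  | zero => simp
  | succ n ih =>
    calc c 1 ^ (n + 2) = c 1 * c 1 ^ (n + 1) := by ring
      _ ≤ c 1 * (c 0 ^ n * c (n + 1)) := mul_le_mul_of_nonneg_left ih (hc 1)
      _ = c 0 ^ n * (c 1 * c (n + 1)) := by ring
      _ ≤ c 0 ^ n * (c 0 * c (n + 2)) :=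
          mul_le_mul_of_nonneg_left (h.one_mul_le_zero_mul_succ hc _) (pow_nonneg (hc 0) n)
      _ = c 0 ^ (n + 1) * c (n + 1 + 1) := by ring

theorem le_max_zero (h : LogConvexSeq c) (hc : ∀ j, 0 ≤ c j) {b n : ℕ} (hbn : b ≤ n) :
    c b ≤ max (c 0) (c n) := by
  induction b with
  | zero => exact le_max_left _ _
  | succ b ih =>
    obtain ⟨k, rfl⟩ : ∃ k, n = b + 1 + k := ⟨n - (b + 1), by omega⟩
    have hK : 0 ≤ max (c 0) (c (b + 1 + k)) := (hc 0).trans (le_max_left _ _)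
    have key := one_pow_succ_le (c := fun j => c (b + j)) (fun j => h (b + j)) (fun j => hc _) k
    simp only [add_zero] at key
    refine le_of_pow_le_pow_left₀ k.succ_ne_zero hK (key.trans ?_)
    rw [pow_succ, show b + (k + 1) = b + 1 + k by ring]
    exact mul_le_mul (pow_le_pow_left₀ (hc b) (ih (by omega)) k) (le_max_right _ _) (hc _)
      (pow_nonneg hK k)

end LogConvexSeq

/-- `F` is bounded relative to `X` on `S` with relative bound `0`, in Kato's terminology. -/
def InfinitesimallyBounded {α : Type*} (S : Set α) (X F : α → ℝ) : Prop :=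
  ∀ ε > 0, ∃ C, ∀ u ∈ S, F u ≤ C + ε * X u

namespace InfinitesimallyBounded

variable {α : Type*} {S : Set α} {X F G A B : α → ℝ}

theorem mono (hG : InfinitesimallyBounded S X G) (h : ∀ u ∈ S, F u ≤ G u) :
    InfinitesimallyBounded S X F := fun ε hε =>
  let ⟨C, hC⟩ := hG ε hε
  ⟨C, fun u hu => (h u hu).trans (hC u hu)⟩

theorem add (hF : InfinitesimallyBounded S X F) (hG : InfinitesimallyBounded S X G) :
    InfinitesimallyBounded S X fun u => F u + G u := fun ε hε => by
  obtain ⟨C₁, h₁⟩ := hF (ε / 2) (by positivity)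
  obtain ⟨C₂, h₂⟩ := hG (ε / 2) (by positivity)
  exact ⟨C₁ + C₂, fun u hu => by linarith [h₁ u hu, h₂ u hu]⟩

theorem const (hX : ∀ u ∈ S, 0 ≤ X u) (c : ℝ) : InfinitesimallyBounded S X fun _ => c :=
  fun _ hε => ⟨c, fun u hu => le_add_of_nonneg_right (mul_nonneg hε.le (hX u hu))⟩

theorem const_mul (hX : ∀ u ∈ S, 0 ≤ X u) (hF : InfinitesimallyBounded S X F) {c : ℝ}
    (hc : 0 ≤ c) : InfinitesimallyBounded S X fun u => c * F u := fun ε hε => by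
  obtain ⟨C, hC⟩ := hF (ε / (c + 1)) (by positivity)
  refine ⟨c * C, fun u hu => ?_⟩
  have hcε : c * (ε / (c + 1)) ≤ ε := by
    rw [mul_div_assoc', div_le_iff₀ (by positivity)]; nlinarith
  calc c * F u ≤ c * C + c * (ε / (c + 1)) * X u := by nlinarith [hC u hu]
    _ ≤ c * C + ε * X u := by nlinarith [hX u hu]

theorem of_le_mul_add_div (hX : ∀ u ∈ S, 0 ≤ X u) (hA : InfinitesimallyBounded S X A)
    (hB : InfinitesimallyBounded S X B)
    (h : ∀ t > 0, ∀ u ∈ S, F u ≤ t * (A u + X u) + B u / t) :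
    InfinitesimallyBounded S X F := fun ε hε => by
  obtain ⟨C, hC⟩ := ((hA.const_mul hX (c := ε / 2) (by positivity)).add
    (hB.const_mul hX (c := 2 / ε) (by positivity))) (ε / 2) (by positivity)
  refine ⟨C, fun u hu => ?_⟩
  have h₁ := h (ε / 2) (by positivity) u hu
  rw [div_div_eq_mul_div, mul_comm, mul_div_assoc] at h₁
  linarith [hC u hu]

theorem exists_pos (hF : InfinitesimallyBounded S X F) {ε : ℝ} (hε : 0 < ε) :
    ∃ C > 0, ∀ u ∈ S, F u ≤ C + ε * X u := by
  obtain ⟨C, hC⟩ := hF ε hε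
  exact ⟨max C 1, by positivity, fun u hu => (hC u hu).trans (by gcongr; exact le_max_left _ _)⟩

end InfinitesimallyBounded

def weightedInner (p : ℕ) (f g : 𝓢(ℝ, ℝ)) : ℝ := ∫ x, x ^ p * f x * g x

namespace weightedInner

theorem integrable_pow_mul_mul (p : ℕ) (f g : 𝓢(ℝ, ℝ)) :
    Integrable fun x : ℝ => x ^ p * f x * g x := by
  have h : (fun x : ℝ => x ^ p).HasTemperateGrowth := Function.HasTemperateGrowth.id'.pow p
  refine (pairing (ContinuousLinearMap.mul ℝ ℝ) (smulLeftCLM ℝ (fun x : ℝ => x ^ p) f)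
    g).integrable.congr ?_
  filter_upwards with x
  simp [h]

theorem comm (p : ℕ) (f g : 𝓢(ℝ, ℝ)) : weightedInner p f g = weightedInner p g f := by
  simp only [weightedInner, mul_right_comm _ (f _)]

theorem self_nonneg (a : ℕ) (f : 𝓢(ℝ, ℝ)) : 0 ≤ weightedInner (2 * a) f f :=
  integral_nonneg fun x => by
    rw [mul_assoc, ← sq, pow_mul]
    positivity

theorem derivCLM_right (p : ℕ) (f g : 𝓢(ℝ, ℝ)) :
    weightedInner p f (derivCLM ℝ ℝ g) =
      -(p * weightedInner (p - 1) f g) - weightedInner p (derivCLM ℝ ℝ f) g := by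
  have hderiv : ∀ x : ℝ, HasDerivAt (fun y => y ^ p * f y * g y)
      (p * (x ^ (p - 1) * f x * g x) + x ^ p * derivCLM ℝ ℝ f x * g x
        + x ^ p * f x * derivCLM ℝ ℝ g x) x := fun x => by
    refine (((hasDerivAt_pow p x).mul (f.hasDerivAt x)).mul (g.hasDerivAt x)).congr_deriv ?_
    simp only [derivCLM_apply, Pi.mul_apply]
    ring
  have i₁ : Integrable fun x : ℝ => p * (x ^ (p - 1) * f x * g x) :=
    (integrable_pow_mul_mul _ f g).const_mul _
  have i₂ := integrable_pow_mul_mul p (derivCLM ℝ ℝ f) g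
  have i₁₂ : Integrable fun x : ℝ =>
      p * (x ^ (p - 1) * f x * g x) + x ^ p * derivCLM ℝ ℝ f x * g x := i₁.add i₂
  have i₃ := integrable_pow_mul_mul p f (derivCLM ℝ ℝ g)
  have h := integral_eq_zero_of_hasDerivAt_of_integrable hderiv (i₁₂.add i₃)
    (integrable_pow_mul_mul p f g)
  rw [integral_add i₁₂ i₃, integral_add i₁ i₂, integral_const_mul] at h
  simp only [weightedInner]
  linarith

theorem abs_add_le_div_add_mul (a b : ℕ) (f g : 𝓢(ℝ, ℝ)) {t : ℝ} (ht : 0 < t) :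
    |weightedInner (a + b) f g| ≤
      weightedInner (2 * a) f f / (4 * t) + t * weightedInner (2 * b) g g := by
  have i₁ := (integrable_pow_mul_mul (2 * a) f f).div_const (4 * t)
  have i₂ := (integrable_pow_mul_mul (2 * b) g g).const_mul t
  calc |weightedInner (a + b) f g|
      ≤ ∫ x, |x ^ (a + b) * f x * g x| := abs_integral_le_integral_abs
    _ ≤ ∫ x, (x ^ (2 * a) * f x * f x / (4 * t) + t * (x ^ (2 * b) * g x * g x)) := by
        refine integral_mono (integrable_pow_mul_mul _ f g).abs (i₁.add i₂) fun x => ?_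
        calc |x ^ (a + b) * f x * g x| = |x ^ a * f x * (x ^ b * g x)| := by ring_nf
          _ ≤ _ := abs_mul_le_div_add_mul _ _ ht
          _ = _ := by ring
    _ = _ := by rw [integral_add i₁ i₂, integral_div, integral_const_mul]; rfl

theorem self_two_mul_le_add_div (a c : ℕ) (hac : a ≤ c) (f : 𝓢(ℝ, ℝ)) {R : ℝ}
    (hR : 0 < R) :
    weightedInner (2 * a) f f ≤
      R ^ (2 * a) * weightedInner 0 f f + weightedInner (2 * c) f f / R ^ (2 * (c - a)) := by
  have i₁ := (integrable_pow_mul_mul 0 f f).const_mul (R ^ (2 * a))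
  have i₂ := (integrable_pow_mul_mul (2 * c) f f).div_const (R ^ (2 * (c - a)))
  calc weightedInner (2 * a) f f
      ≤ ∫ x, (R ^ (2 * a) * (x ^ 0 * f x * f x) +
          x ^ (2 * c) * f x * f x / R ^ (2 * (c - a))) := by
        refine integral_mono (integrable_pow_mul_mul _ f f) (i₁.add i₂) fun x => ?_
        have := mul_le_mul_of_nonneg_right (pow_two_mul_le_add_div x hR hac)
          (mul_self_nonneg (f x))
        simp only [pow_zero, one_mul]
        convert this using 1 <;> ring
    _ = _ := by rw [integral_add i₁ i₂, integral_div, integral_const_mul]; rfl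

theorem sq_derivCLM_le_mul (f : 𝓢(ℝ, ℝ)) :
    weightedInner 0 (derivCLM ℝ ℝ f) (derivCLM ℝ ℝ f) ^ 2 ≤
      weightedInner 0 f f *
        weightedInner 0 (derivCLM ℝ ℝ (derivCLM ℝ ℝ f)) (derivCLM ℝ ℝ (derivCLM ℝ ℝ f)) := by
  have hZ : weightedInner 0 (derivCLM ℝ ℝ f) (derivCLM ℝ ℝ f) =
      -weightedInner (0 + 0) (derivCLM ℝ ℝ (derivCLM ℝ ℝ f)) f := by
    simpa using derivCLM_right 0 (derivCLM ℝ ℝ f) f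
  rw [mul_comm]
  refine sq_le_mul_of_forall_le_div_add_mul (self_nonneg 0 _) (self_nonneg 0 _) (self_nonneg 0 _)
    fun t ht => ?_
  rw [hZ]
  exact (neg_le_abs _).trans (abs_add_le_div_add_mul 0 0 _ f ht)

theorem self_zero_le_derivCLM_add_div (f : 𝓢(ℝ, ℝ)) {c : ℕ} (hc : 1 ≤ c) {R : ℝ}
    (hR : 0 < R) :
    weightedInner 0 f f ≤
      4 * R ^ 2 * weightedInner 0 (derivCLM ℝ ℝ f) (derivCLM ℝ ℝ f) +
        weightedInner (2 * c) f f / R ^ (2 * c) := by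
  have hIBP : weightedInner 0 f f = -2 * weightedInner (1 + 0) f (derivCLM ℝ ℝ f) := by
    have := derivCLM_right 1 f f
    rw [comm 1 (derivCLM ℝ ℝ f)] at this
    simp only [Nat.cast_one, one_mul, Nat.sub_self] at this
    simp only [Nat.add_zero]
    linarith
  have hCS := abs_add_le_div_add_mul 1 0 f (derivCLM ℝ ℝ f) (pow_pos hR 2)
  have hw := self_two_mul_le_add_div 1 c hc f hR
  have hpow : R ^ (2 * c) = R ^ (2 * (c - 1)) * R ^ 2 := by
    rw [← pow_add]; congr 1; omega
  set P := weightedInner 0 f f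
  set X := weightedInner (2 * c) f f
  set K := R ^ (2 * (c - 1))
  have hK : 0 < K := by positivity
  have : (R ^ (2 * 1) * P + X / K) / (4 * R ^ 2) = P / 4 + X / (K * R ^ 2) / 4 := by
    field_simp
    ring
  rw [hpow]
  simp only [mul_zero] at hCS
  nlinarith [neg_abs_le (weightedInner (1 + 0) f (derivCLM ℝ ℝ f)),
    div_le_div_of_nonneg_right hw (by positivity : (0 : ℝ) ≤ 4 * R ^ 2)]

end weightedInner

def derivIter (q : ℕ) (u : 𝓢(ℝ, ℝ)) : 𝓢(ℝ, ℝ) := (derivCLM ℝ ℝ)^[q] u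

theorem derivIter_succ (q : ℕ) (u : 𝓢(ℝ, ℝ)) :
    derivIter (q + 1) u = derivCLM ℝ ℝ (derivIter q u) :=
  Function.iterate_succ_apply' _ q u

theorem coe_derivIter (q : ℕ) (u : 𝓢(ℝ, ℝ)) : ⇑(derivIter q u) = iteratedDeriv q u := by
  induction q with
  | zero => rfl
  | succ q ih => ext x; rw [derivIter_succ, derivCLM_apply, ih, iteratedDeriv_succ]

def weightedNormSq (u : 𝓢(ℝ, ℝ)) (a b : ℕ) : ℝ :=
  weightedInner (2 * a) (derivIter b u) (derivIter b u)

theorem weightedNormSq_eq_integral (u : 𝓢(ℝ, ℝ)) (a b : ℕ) :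
    weightedNormSq u a b = ∫ x, x ^ (2 * a) * iteratedDeriv b u x ^ 2 := by
  simp only [weightedNormSq, weightedInner, coe_derivIter, mul_assoc, sq]

theorem weightedNormSq_nonneg (u : 𝓢(ℝ, ℝ)) (a b : ℕ) : 0 ≤ weightedNormSq u a b :=
  weightedInner.self_nonneg a _

theorem logConvexSeq_weightedNormSq (u : 𝓢(ℝ, ℝ)) : LogConvexSeq (weightedNormSq u 0) := by
  intro j
  simpa only [weightedNormSq, derivIter_succ, mul_zero] using
    weightedInner.sq_derivCLM_le_mul (derivIter j u)

section Absorption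

variable {S : Set 𝓢(ℝ, ℝ)} {c : ℕ}

theorem InfinitesimallyBounded.abs_weightedInner_derivIter
    (hX : ∀ u ∈ S, 0 ≤ weightedNormSq u c 0) {p q r : ℕ}
    (h : ∀ α ≤ r, InfinitesimallyBounded S (weightedNormSq · c 0)
      fun u => |weightedInner (p - α) (derivIter (q + r - α) u) (derivIter 0 u)|) :
    InfinitesimallyBounded S (weightedNormSq · c 0)
      fun u => |weightedInner p (derivIter q u) (derivIter r u)| := by
  induction r generalizing p q with
  | zero => simpa using h 0 le_rfl
  | succ r ih =>
    have h₁ := ih (p := p - 1) (q := q) fun α hα => by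
      rw [Nat.sub_sub, Nat.add_comm 1, show q + r - α = q + (r + 1) - (α + 1) by omega]
      exact h (α + 1) (by omega)
    have h₂ := ih (p := p) (q := q + 1) fun α hα => by
      rw [show q + 1 + r - α = q + (r + 1) - α by omega]
      exact h α (by omega)
    refine (((h₁.const_mul hX (Nat.cast_nonneg p))).add h₂).mono fun u _ => ?_
    rw [derivIter_succ, weightedInner.derivCLM_right, ← derivIter_succ]
    refine (abs_sub _ _).trans_eq ?_
    rw [abs_neg, abs_mul, Nat.abs_cast]

theorem InfinitesimallyBounded.abs_weightedInner_derivIter_zero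
    (hX : ∀ u ∈ S, 0 ≤ weightedNormSq u c 0)
    (hP : InfinitesimallyBounded S (weightedNormSq · c 0) (weightedNormSq · 0 0)) {a b q : ℕ}
    (hb : b ≤ c) (h : InfinitesimallyBounded S (weightedNormSq · c 0) (weightedNormSq · a q)) :
    InfinitesimallyBounded S (weightedNormSq · c 0)
      fun u => |weightedInner (a + b) (derivIter q u) (derivIter 0 u)| := by
  refine of_le_mul_add_div hX hP (h.const_mul hX (c := 1 / 4) (by norm_num)) fun t ht u _ => ?_
  have hw := weightedInner.self_two_mul_le_add_div b c hb (derivIter 0 u) one_pos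
  simp only [one_pow, one_mul, div_one] at hw
  calc |weightedInner (a + b) (derivIter q u) (derivIter 0 u)|
      ≤ weightedNormSq u a q / (4 * t) +
          t * weightedInner (2 * b) (derivIter 0 u) (derivIter 0 u) :=
        weightedInner.abs_add_le_div_add_mul a b _ _ ht
    _ ≤ weightedNormSq u a q / (4 * t) + t * (weightedNormSq u 0 0 + weightedNormSq u c 0) := by
        gcongr; exact hw
    _ = t * (weightedNormSq u 0 0 + weightedNormSq u c 0) + 1 / 4 * weightedNormSq u a q / t := by
        field_simp
        ring

theorem InfinitesimallyBounded.weightedNormSq_of_forall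
    (hX : ∀ u ∈ S, 0 ≤ weightedNormSq u c 0)
    (hP : InfinitesimallyBounded S (weightedNormSq · c 0) (weightedNormSq · 0 0)) {a d : ℕ}
    (h : ∀ α ≤ d, InfinitesimallyBounded S (weightedNormSq · c 0)
      (weightedNormSq · (2 * a - α - c) (2 * d - α))) :
    InfinitesimallyBounded S (weightedNormSq · c 0) (weightedNormSq · a d) := by
  refine (abs_weightedInner_derivIter hX fun α hα => ?_).mono fun u _ => le_abs_self _
  rw [show 2 * a - α = (2 * a - α - c) + min (2 * a - α) c by omega,
    show d + d - α = 2 * d - α by omega]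
  exact abs_weightedInner_derivIter_zero hX hP (min_le_right _ _) (h α hα)

end Absorption

section SobolevBall

variable {N c : ℕ} {M : ℝ}

theorem infinitesimallyBounded_weightedNormSq_zero_zero (hN : 1 ≤ N) (hc : 1 ≤ c) :
    InfinitesimallyBounded {u | weightedNormSq u 0 N ≤ M} (weightedNormSq · c 0)
      (weightedNormSq · 0 0) := by
  intro ε hε
  obtain ⟨n, rfl⟩ : ∃ n, N = n + 1 := ⟨N - 1, by omega⟩
  set R := max 1 (2 / ε)
  have hR : 1 ≤ R := le_max_left _ _
  have hRε : 2 / ε ≤ R ^ (2 * c) := (le_max_right _ _).trans (le_self_pow₀ hR (by omega))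
  refine ⟨(2 * (4 * R ^ 2)) ^ (n + 1) * M, fun u hu => ?_⟩
  have hM : 0 ≤ M := (weightedNormSq_nonneg u 0 _).trans hu
  have hPY :=
    weightedInner.self_zero_le_derivCLM_add_div (derivIter 0 u) hc (R := R) (by positivity)
  rw [← derivIter_succ] at hPY
  have hYP := (logConvexSeq_weightedNormSq u).one_pow_succ_le (weightedNormSq_nonneg u 0) n
  have key := le_pow_mul_add_of_le_mul_add (weightedNormSq_nonneg u 0 0)
    (div_nonneg (weightedNormSq_nonneg u c 0) (by positivity)) (by positivity) hM hPY
    (hYP.trans (mul_le_mul_of_nonneg_left hu (pow_nonneg (weightedNormSq_nonneg u 0 0) n)))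
  have h2 : 2 / R ^ (2 * c) ≤ ε := by
    rw [div_le_iff₀ (by positivity)]
    rw [div_le_iff₀ hε] at hRε
    linarith
  have hε' : 2 * (weightedNormSq u c 0 / R ^ (2 * c)) ≤ ε * weightedNormSq u c 0 :=
    calc 2 * (weightedNormSq u c 0 / R ^ (2 * c))
        = 2 / R ^ (2 * c) * weightedNormSq u c 0 := by ring
      _ ≤ ε * weightedNormSq u c 0 := by gcongr; exact weightedNormSq_nonneg u c 0
  linarith

theorem infinitesimallyBounded_weightedNormSq_zero (hN : 1 ≤ N) (hc : 1 ≤ c) {b : ℕ}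
    (hb : b ≤ N) :
    InfinitesimallyBounded {u | weightedNormSq u 0 N ≤ M} (weightedNormSq · c 0)
      (weightedNormSq · 0 b) :=
  ((infinitesimallyBounded_weightedNormSq_zero_zero hN hc).add
    (.const (fun u _ => weightedNormSq_nonneg u c 0) M)).mono fun u hu =>
    ((logConvexSeq_weightedNormSq u).le_max_zero (weightedNormSq_nonneg u 0) hb).trans
      (max_le (by linarith [(weightedNormSq_nonneg u 0 N).trans hu])
        (by linarith [weightedNormSq_nonneg u 0 0, show weightedNormSq u 0 N ≤ M from hu]))

theorem infinitesimallyBounded_weightedNormSq {m : ℕ} (hN : 1 ≤ N) {a : ℕ} (ha : 1 ≤ a)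
    (ham : a ≤ m) {d : ℕ} (hd : 2 * m * d ≤ N * (m + 1 - a)) :
    InfinitesimallyBounded {u | weightedNormSq u 0 N ≤ M} (weightedNormSq · (m + 1) 0)
      (weightedNormSq · a d) := by
  induction a using Nat.strong_induction_on generalizing d with
  | _ a ih =>
  refine .weightedNormSq_of_forall (fun u _ => weightedNormSq_nonneg u _ 0)
    (infinitesimallyBounded_weightedNormSq_zero_zero hN (by omega)) fun α hα => ?_
  by_cases h0 : 2 * a - α - (m + 1) = 0
  · have h2d : m * (2 * d) ≤ m * N :=
      calc m * (2 * d) = 2 * m * d := by ring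
        _ ≤ N * (m + 1 - a) := hd
        _ ≤ N * m := Nat.mul_le_mul_left N (by omega)
        _ = m * N := Nat.mul_comm N m
    rw [h0]
    exact infinitesimallyBounded_weightedNormSq_zero hN (by omega)
      ((Nat.sub_le _ _).trans (Nat.le_of_mul_le_mul_left h2d (by omega)))
  · refine ih _ (by omega) (by omega) (by omega) ?_
    calc 2 * m * (2 * d - α) ≤ 2 * m * (2 * d) := Nat.mul_le_mul_left _ (Nat.sub_le _ _)
      _ = 2 * (2 * m * d) := by ring
      _ ≤ 2 * (N * (m + 1 - a)) := Nat.mul_le_mul_left 2 hd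
      _ = N * (2 * (m + 1 - a)) := by ring
      _ ≤ N * (m + 1 - (2 * a - α - (m + 1))) := Nat.mul_le_mul_left N (by omega)

end SobolevBall

end

theorem stmt11_general (m k N : ℕ) (hm : 1 ≤ m) (hN : 1 ≤ N)
    (hmkN : 2 * m * k ≤ N) (M : ℝ) :
    ∀ ε > (0:ℝ), ∃ Mε > (0:ℝ), ∀ u : SchwartzMap ℝ ℝ,
      (∫ x : ℝ, (iteratedDeriv N (u : ℝ → ℝ) x) ^ 2) ≤ M →
      (∫ x : ℝ, x ^ (2 * m) * (iteratedDeriv k (u : ℝ → ℝ) x) ^ 2)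
        ≤ Mε + ε * ∫ x : ℝ, x ^ (2 * m + 2) * (u x) ^ 2 := by
  intro ε hε
  have hmk : 2 * m * k ≤ N * (m + 1 - m) := by simpa using hmkN
  obtain ⟨C, hC, hbound⟩ :=
    (infinitesimallyBounded_weightedNormSq (M := M) hN hm le_rfl hmk).exists_pos hε
  refine ⟨C, hC, fun u hu => ?_⟩
  simpa [weightedNormSq_eq_integral, mul_add] using
    hbound u (by simpa [weightedNormSq_eq_integral] using hu)

theorem stmt11 (m k N : ℕ) (hm : 1 ≤ m) (hk : 1 ≤ k) (hN : 1 ≤ N)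
    (hmkN : 2 * m * k ≤ N) (M : ℝ) (hM : 0 < M) :
    ∀ ε > (0:ℝ), ∃ Mε > (0:ℝ), ∀ u : SchwartzMap ℝ ℝ,
      (∫ x : ℝ, (iteratedDeriv N (u : ℝ → ℝ) x) ^ 2) ≤ M →
      (∫ x : ℝ, x ^ (2 * m) * (iteratedDeriv k (u : ℝ → ℝ) x) ^ 2)
        ≤ Mε + ε * ∫ x : ℝ, x ^ (2 * m + 2) * (u x) ^ 2 :=
  stmt11_general m k N hm hN hmkN M
end
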